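/- arXiv:2507.06259 — 4 statements merged into one kernel-verified Lean document; each statement's English description precedes it below -/
import Mathlib

section
/- Under the hypotheses of an anti-invariant Riemannian submersion π : M(c) → N from a quaternionic space form with r-dimensional fibers, the scalar curvature τ̂ of any fiber satisfies τ̂ = (c/4) r(r−1) − r² ‖H‖² + Σ_{i,j=1}^r ‖T_{U_j} U_i‖², hence τ̂ ≥ (c/4) r(r−1) − r² ‖H‖², with equality if and only if each fiber is totally geodesic (T ≡ 0). -/
open scoped RealInnerProductSpace

/-- Scalar curvature of the fibers of an anti-invariant Riemannian submersion
from a quaternionic space form (Theorem 3.2).  `Uf` is an orthonormal frame of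
the `r`-dimensional vertical distribution, anti-invariant under the quaternionic
structures `J`; `T` is the O'Neill tensor (symmetric on vertical vectors);
`τ̂ = ∑_{j,k} R̂(U_j,U_k,U_k,U_j)` via the Gauss equation, and
`H = (1/r)∑_j T_{U_j}U_j`.  Then
`τ̂ = (c/4)r(r−1) − r²‖H‖² + ∑_{i,j}‖T_{U_j}U_i‖²`, hence
`τ̂ ≥ (c/4)r(r−1) − r²‖H‖²`, with equality iff the fibers are totally geodesic
(`T ≡ 0` on the vertical frame). -/
theorem stmt_5 {V : Type*} [NormedAddCommGroup V] [InnerProductSpace ℝ V]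
    (c : ℝ) (r : ℕ) (J : Fin 3 → V → V) (Rm : V → V → V → V → ℝ)
    (hRm : ∀ X Y Z W, Rm X Y Z W =
      (c / 4) * (⟪Y, Z⟫ * ⟪X, W⟫ - ⟪X, Z⟫ * ⟪Y, W⟫
        + ∑ α : Fin 3, (⟪J α Y, Z⟫ * ⟪J α X, W⟫ - ⟪J α X, Z⟫ * ⟪J α Y, W⟫
            + 2 * ⟪J α Y, X⟫ * ⟪J α Z, W⟫)))
    (T : V → V → V)
    (Uf : Fin r → V) (hUon : Orthonormal ℝ Uf)
    (hanti : ∀ (α : Fin 3) (i j : Fin r), ⟪J α (Uf i), Uf j⟫ = 0)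
    (hTsym : ∀ i j : Fin r, T (Uf i) (Uf j) = T (Uf j) (Uf i))
    (tauHat : ℝ)
    (htau : tauHat = ∑ j, ∑ k, (Rm (Uf j) (Uf k) (Uf k) (Uf j)
      - ⟪T (Uf j) (Uf j), T (Uf k) (Uf k)⟫ + ⟪T (Uf k) (Uf j), T (Uf j) (Uf k)⟫))
    (H : V) (hH : H = (1 / (r : ℝ)) • ∑ j, T (Uf j) (Uf j)) :
    tauHat = (c / 4) * (r : ℝ) * ((r : ℝ) - 1) - (r : ℝ) ^ 2 * ‖H‖ ^ 2
        + ∑ i, ∑ j, ‖T (Uf j) (Uf i)‖ ^ 2 ∧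
    (c / 4) * (r : ℝ) * ((r : ℝ) - 1) - (r : ℝ) ^ 2 * ‖H‖ ^ 2 ≤ tauHat ∧
    (tauHat = (c / 4) * (r : ℝ) * ((r : ℝ) - 1) - (r : ℝ) ^ 2 * ‖H‖ ^ 2 ↔
      ∀ i j : Fin r, T (Uf i) (Uf j) = 0) := by
  have hinner : ∀ i j, ⟪Uf i, Uf j⟫ = if i = j then (1:ℝ) else 0 :=
    orthonormal_iff_ite.mp hUon
  set S := ∑ j, T (Uf j) (Uf j) with hS
  have hSsum : ⟪S, S⟫ = ∑ j, ∑ k, ⟪T (Uf j) (Uf j), T (Uf k) (Uf k)⟫ := by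
    rw [hS, sum_inner]
    exact Finset.sum_congr rfl fun j _ => inner_sum _ _ _
  have hRm1 : ∀ j k : Fin r, Rm (Uf j) (Uf k) (Uf k) (Uf j)
      = (c/4) - (c/4) * (if j = k then (1:ℝ) else 0) := by
    intro j k
    rw [hRm]
    have h1 : (∑ α : Fin 3, (⟪J α (Uf k), Uf k⟫ * ⟪J α (Uf j), Uf j⟫
        - ⟪J α (Uf j), Uf k⟫ * ⟪J α (Uf k), Uf j⟫
        + 2 * ⟪J α (Uf k), Uf j⟫ * ⟪J α (Uf k), Uf j⟫)) = 0 := by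
      simp [hanti]
    rw [h1, hinner, hinner, hinner, hinner]
    by_cases h : j = k <;> simp [h, eq_comm]
  have hRmsum : ∑ j, ∑ k, Rm (Uf j) (Uf k) (Uf k) (Uf j)
      = (c/4) * (r:ℝ) * ((r:ℝ) - 1) := by
    have key : ∀ j : Fin r, ∑ k, Rm (Uf j) (Uf k) (Uf k) (Uf j)
        = (c/4) * ((r:ℝ) - 1) := by
      intro j
      rw [Finset.sum_congr rfl fun k _ => hRm1 j k, Finset.sum_sub_distrib,
        Finset.sum_const, ← Finset.mul_sum, Finset.sum_ite_eq Finset.univ j (fun _ => (1:ℝ))]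
      simp [mul_sub]
      ring
    rw [Finset.sum_congr rfl fun j _ => key j, Finset.sum_const]
    simp
    ring
  have hQsym : ∀ j k : Fin r, ⟪T (Uf k) (Uf j), T (Uf j) (Uf k)⟫ = ‖T (Uf k) (Uf j)‖^2 := by
    intro j k
    rw [hTsym j k, real_inner_self_eq_norm_sq]
  have hHS : (r:ℝ)^2 * ‖H‖^2 = ⟪S, S⟫ := by
    rcases Nat.eq_zero_or_pos r with hr | hr
    · subst hr
      have : S = 0 := by simp [hS]
      simp [this, hH]
    · have hr' : (r:ℝ) ≠ 0 := Nat.cast_ne_zero.mpr hr.ne'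
      rw [real_inner_self_eq_norm_sq, hH, norm_smul]
      have : |(1 / (r:ℝ))| = 1 / (r:ℝ) := abs_of_pos (by positivity)
      rw [Real.norm_eq_abs, this, mul_pow]
      field_simp
  set Q := ∑ i, ∑ j, ‖T (Uf j) (Uf i)‖^2 with hQ
  have hmain : tauHat = (c/4) * (r:ℝ) * ((r:ℝ) - 1) - (r:ℝ)^2 * ‖H‖^2 + Q := by
    rw [htau]
    have : ∀ j : Fin r, ∑ k, (Rm (Uf j) (Uf k) (Uf k) (Uf j)
        - ⟪T (Uf j) (Uf j), T (Uf k) (Uf k)⟫ + ⟪T (Uf k) (Uf j), T (Uf j) (Uf k)⟫)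
        = (∑ k, Rm (Uf j) (Uf k) (Uf k) (Uf j))
          - (∑ k, ⟪T (Uf j) (Uf j), T (Uf k) (Uf k)⟫)
          + ∑ k, ‖T (Uf k) (Uf j)‖^2 := by
      intro j
      rw [Finset.sum_add_distrib, Finset.sum_sub_distrib]
      congr 1
      exact Finset.sum_congr rfl fun k _ => hQsym j k
    rw [Finset.sum_congr rfl fun j _ => this j, Finset.sum_add_distrib,
      Finset.sum_sub_distrib, hRmsum, ← hSsum, hHS, hQ]
  have hQnn : 0 ≤ Q := by
    apply Finset.sum_nonneg
    intro i _
    exact Finset.sum_nonneg fun j _ => sq_nonneg _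
  refine ⟨hmain, by linarith, ?_⟩
  constructor
  · intro h
    have hQ0 : Q = 0 := by linarith
    intro i j
    have h1 := (Finset.sum_eq_zero_iff_of_nonneg
      (fun i _ => Finset.sum_nonneg fun j _ => sq_nonneg (‖T (Uf j) (Uf i)‖))).mp hQ0
      j (Finset.mem_univ j)
    have h2 := (Finset.sum_eq_zero_iff_of_nonneg
      (fun k _ => sq_nonneg (‖T (Uf k) (Uf j)‖))).mp h1 i (Finset.mem_univ i)
    have : ‖T (Uf i) (Uf j)‖ = 0 := by
      have := sq_eq_zero_iff.mp h2
      simpa using this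
    exact norm_eq_zero.mp this
  · intro h
    have hQ0 : Q = 0 := by
      rw [hQ]
      apply Finset.sum_eq_zero
      intro i _
      apply Finset.sum_eq_zero
      intro j _
      simp [h j i]
    linarith
end

section
/- Let π : M(c) → N be an anti-invariant Riemannian submersion from a quaternionic space form onto a Riemannian manifold, with ℓ-dimensional horizontal distribution H and O'Neill tensor A. For any unit horizontal vector X, the Ricci curvature Ric*(X) of the horizontal distribution satisfies Ric*(X) = (c/4){ (ℓ−1) + 3 Σ_{j=1}^ℓ Σ_{α=1}^3 g(C_{J_α}X, X_j)² } − 3 Σ_{j=1}^ℓ ‖A_X X_j‖², where {X_1,...,X_ℓ} is a horizontal orthonormal frame and C_{J_α}X is the horizontal part of J_α X. In particular Ric*(X) ≤ (c/4){ (ℓ−1) + 3 Σ_j Σ_α g(C_{J_α}X, X_j)² }, with equality if and only if A ≡ 0, i.e. the horizontal distribution is integrable. -/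
open scoped RealInnerProductSpace

/-- Horizontal Ricci curvature of an anti-invariant Riemannian submersion from a
quaternionic space form (Theorem 3.3).  `Xf` is an orthonormal frame of the
`ℓ`-dimensional horizontal distribution `horiz`; for horizontal `x`,
`J α x = B α x + C α x` with `B α x` vertical (orthogonal to the horizontal
frame) and `C α x` horizontal; the quaternionic structures `J α` are
skew-adjoint; `A` is the O'Neill integrability tensor, alternating on
horizontal vectors; `RicStar` is defined via the curvature `R*` of the
horizontal distribution.  Then for every unit horizontal `X`,
`Ric*(X) = (c/4)((ℓ−1) + 3∑_j∑_α g(C_{J_α}X, X_j)²) − 3∑_j ‖A_X X_j‖²`, hence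
`Ric*(X) ≤ (c/4)((ℓ−1) + 3∑_j∑_α g(C_{J_α}X, X_j)²)`, with equality for all such
`X` iff `A ≡ 0` on horizontal vectors (the horizontal distribution is
integrable). -/
theorem stmt_6 {V : Type*} [NormedAddCommGroup V] [InnerProductSpace ℝ V]
    (c : ℝ) (ℓ : ℕ) (J : Fin 3 → V → V) (Rm : V → V → V → V → ℝ)
    (hRm : ∀ X Y Z W, Rm X Y Z W =
      (c / 4) * (⟪Y, Z⟫ * ⟪X, W⟫ - ⟪X, Z⟫ * ⟪Y, W⟫
        + ∑ α : Fin 3, (⟪J α Y, Z⟫ * ⟪J α X, W⟫ - ⟪J α X, Z⟫ * ⟪J α Y, W⟫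
            + 2 * ⟪J α Y, X⟫ * ⟪J α Z, W⟫)))
    (hJskew : ∀ (α : Fin 3) (x y : V), ⟪J α x, y⟫ = -⟪x, J α y⟫)
    (Xf : Fin ℓ → V) (hXon : Orthonormal ℝ Xf)
    (horiz : Submodule ℝ V) (hhoriz : horiz = Submodule.span ℝ (Set.range Xf))
    (B C : Fin 3 → V → V)
    (hBC : ∀ (α : Fin 3) (x : V), x ∈ horiz → J α x = B α x + C α x)
    (hBvert : ∀ (α : Fin 3) (x : V) (j : Fin ℓ), x ∈ horiz → ⟪B α x, Xf j⟫ = 0)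
    (hChoriz : ∀ (α : Fin 3) (x : V), x ∈ horiz → C α x ∈ horiz)
    (A : V →ₗ[ℝ] V →ₗ[ℝ] V)
    (hAalt : ∀ x y : V, x ∈ horiz → y ∈ horiz → A x y = -A y x)
    (RicStar : V → ℝ)
    (hRicStar : ∀ X : V, RicStar X = ∑ j, (Rm X (Xf j) (Xf j) X
      + 2 * ⟪A X (Xf j), A (Xf j) X⟫ - ⟪A (Xf j) (Xf j), A X X⟫
      + ⟪A X (Xf j), A (Xf j) X⟫)) :
    (∀ X ∈ horiz, ‖X‖ = 1 →
      RicStar X = (c / 4) * (((ℓ : ℝ) - 1)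
            + 3 * ∑ j, ∑ α : Fin 3, ⟪C α X, Xf j⟫ ^ 2)
          - 3 * ∑ j, ‖A X (Xf j)‖ ^ 2
        ∧ RicStar X ≤ (c / 4) * (((ℓ : ℝ) - 1)
            + 3 * ∑ j, ∑ α : Fin 3, ⟪C α X, Xf j⟫ ^ 2)) ∧
    ((∀ X ∈ horiz, ‖X‖ = 1 →
        RicStar X = (c / 4) * (((ℓ : ℝ) - 1)
          + 3 * ∑ j, ∑ α : Fin 3, ⟪C α X, Xf j⟫ ^ 2)) ↔
      ∀ x y : V, x ∈ horiz → y ∈ horiz → A x y = 0) := by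

  have hXfmem : ∀ j, Xf j ∈ horiz := by
    intro j; rw [hhoriz]; exact Submodule.subset_span ⟨j, rfl⟩
  have hAxx : ∀ x ∈ horiz, A x x = 0 := by
    intro x hx
    have h := hAalt x x hx hx
    have h2 : (2 : ℝ) • A x x = 0 := by
      rw [two_smul]; nth_rewrite 2 [h]; simp
    exact (smul_eq_zero.mp h2).resolve_left (by norm_num)
  have hJ0 : ∀ (α : Fin 3) (y : V), ⟪J α y, y⟫ = 0 := by
    intro α y
    linarith [hJskew α y y, real_inner_comm y (J α y)]
  have hJC : ∀ (α : Fin 3) (x : V), x ∈ horiz → ∀ j, ⟪J α x, Xf j⟫ = ⟪C α x, Xf j⟫ := by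
    intro α x hx j
    rw [hBC α x hx, inner_add_left, hBvert α x j hx, zero_add]
  -- key formula
  have key : ∀ X ∈ horiz, ‖X‖ = 1 →
      RicStar X = (c / 4) * (((ℓ : ℝ) - 1)
            + 3 * ∑ j, ∑ α : Fin 3, ⟪C α X, Xf j⟫ ^ 2)
          - 3 * ∑ j, ‖A X (Xf j)‖ ^ 2 := by
    intro X hX hX1
    -- Parseval
    obtain ⟨f, hf⟩ := (Submodule.mem_span_range_iff_exists_fun ℝ).mp (hhoriz ▸ hX)
    have hcoef : ∀ j, ⟪Xf j, X⟫ = f j := by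
      intro j; rw [← hf]; exact hXon.inner_right_fintype f j
    have hXX : ⟪X, X⟫ = (1 : ℝ) := by
      rw [real_inner_self_eq_norm_sq, hX1]; norm_num
    have hpars : ∑ j, ⟪X, Xf j⟫ ^ 2 = 1 := by
      have : ⟪X, X⟫ = ∑ j, ⟪X, Xf j⟫ ^ 2 := by
        conv_lhs => rw [← hf]
        rw [sum_inner]
        refine Finset.sum_congr rfl fun j _ => ?_
        rw [real_inner_smul_left,
          (show ⟪Xf j, ∑ i, f i • Xf i⟫ = f j from hXon.inner_right_fintype f j),
          real_inner_comm (Xf j) X, hcoef]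
        ring
      rw [← this, hXX]
    have hterm : ∀ j, Rm X (Xf j) (Xf j) X
        + 2 * ⟪A X (Xf j), A (Xf j) X⟫ - ⟪A (Xf j) (Xf j), A X X⟫
        + ⟪A X (Xf j), A (Xf j) X⟫
        = (c / 4) * (1 - ⟪X, Xf j⟫ ^ 2 + 3 * ∑ α : Fin 3, ⟪C α X, Xf j⟫ ^ 2)
          - 3 * ‖A X (Xf j)‖ ^ 2 := by
      intro j
      have hswap : ∀ α : Fin 3, ⟪J α (Xf j), X⟫ = -⟪C α X, Xf j⟫ := by
        intro α
        rw [hJskew α (Xf j) X, real_inner_comm, hJC α X hX j]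
      have hRmj : Rm X (Xf j) (Xf j) X
          = (c / 4) * (1 - ⟪X, Xf j⟫ ^ 2 + 3 * ∑ α : Fin 3, ⟪C α X, Xf j⟫ ^ 2) := by
        rw [hRm]
        have h1 : ⟪Xf j, Xf j⟫ = (1 : ℝ) := by
          rw [real_inner_self_eq_norm_sq, hXon.1 j]; norm_num
        have hsum : ∀ α : Fin 3,
            ⟪J α (Xf j), Xf j⟫ * ⟪J α X, X⟫ - ⟪J α X, Xf j⟫ * ⟪J α (Xf j), X⟫
              + 2 * ⟪J α (Xf j), X⟫ * ⟪J α (Xf j), X⟫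
            = 3 * ⟪C α X, Xf j⟫ ^ 2 := by
          intro α
          rw [hJ0, hJ0, hswap, hJC α X hX j]; ring
        rw [Finset.sum_congr rfl fun α _ => hsum α, h1, hXX,
          real_inner_comm X (Xf j)]
        congr 1
        rw [Finset.mul_sum]
        ring
      have hAA : ⟪A X (Xf j), A (Xf j) X⟫ = -‖A X (Xf j)‖ ^ 2 := by
        rw [hAalt (Xf j) X (hXfmem j) hX, inner_neg_right,
          real_inner_self_eq_norm_sq]
      rw [hRmj, hAA, hAxx (Xf j) (hXfmem j), inner_zero_left]
      ring
    rw [hRicStar, Finset.sum_congr rfl fun j _ => hterm j,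
      Finset.sum_sub_distrib, ← Finset.mul_sum, ← Finset.mul_sum]
    have : ∑ j, (1 - ⟪X, Xf j⟫ ^ 2 + 3 * ∑ α : Fin 3, ⟪C α X, Xf j⟫ ^ 2)
        = ((ℓ : ℝ) - 1) + 3 * ∑ j, ∑ α : Fin 3, ⟪C α X, Xf j⟫ ^ 2 := by
      rw [Finset.sum_add_distrib, Finset.sum_sub_distrib, Finset.sum_const,
        hpars, ← Finset.mul_sum]
      simp
    rw [this]
  have hsumnn : ∀ X : V, (0 : ℝ) ≤ 3 * ∑ j, ‖A X (Xf j)‖ ^ 2 := by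
    intro X
    positivity
  constructor
  · intro X hX hX1
    refine ⟨key X hX hX1, ?_⟩
    rw [key X hX hX1]
    linarith [hsumnn X]
  · constructor
    · intro heq x y hx hy
      have hAunit : ∀ X ∈ horiz, ‖X‖ = 1 → ∀ j, A X (Xf j) = 0 := by
        intro X hX hX1 j
        have h1 := key X hX hX1
        have h2 := heq X hX hX1
        have h3 : ∑ j, ‖A X (Xf j)‖ ^ 2 = 0 := by linarith
        have h4 : ‖A X (Xf j)‖ ^ 2 = 0 := by
          have := Finset.sum_eq_zero_iff_of_nonneg
            (fun i _ => by positivity : ∀ i ∈ Finset.univ, (0:ℝ) ≤ ‖A X (Xf i)‖ ^ 2) |>.mp h3 j (Finset.mem_univ j)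
          exact this
        have : ‖A X (Xf j)‖ = 0 := by
          nlinarith [norm_nonneg (A X (Xf j))]
        exact norm_eq_zero.mp this
      have hAx : ∀ j, A x (Xf j) = 0 := by
        intro j
        by_cases hx0 : x = 0
        · simp [hx0]
        · have hnx : ‖x‖ ≠ 0 := norm_ne_zero_iff.mpr hx0
          have hXm : (‖x‖⁻¹ • x) ∈ horiz := horiz.smul_mem _ hx
          have hXn : ‖‖x‖⁻¹ • x‖ = 1 := by
            rw [norm_smul, norm_inv, norm_norm, inv_mul_cancel₀ hnx]
          have h0 := hAunit _ hXm hXn j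
          rw [map_smul] at h0
          have : ‖x‖⁻¹ • A x (Xf j) = 0 := h0
          have := smul_eq_zero.mp this
          rcases this with h | h
          · exact absurd h (inv_ne_zero hnx)
          · exact h
      obtain ⟨g, hg⟩ := (Submodule.mem_span_range_iff_exists_fun ℝ).mp (hhoriz ▸ hy)
      rw [← hg, map_sum]
      refine Finset.sum_eq_zero fun j _ => ?_
      rw [map_smul, hAx j, smul_zero]
    · intro hA X hX hX1
      rw [key X hX hX1]
      have : ∑ j, ‖A X (Xf j)‖ ^ 2 = 0 := by
        refine Finset.sum_eq_zero fun j _ => ?_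
        rw [hA X (Xf j) hX (hXfmem j)]
        simp
      rw [this]
      ring
end

section
/- Let π : M(c) → N be an anti-invariant Riemannian submersion from a quaternionic space form with r-dimensional fibers, and let {U_1,...,U_r} be a vertical orthonormal frame. Then the Ricci curvature of the fiber in the direction U_1 satisfies Riĉ(U_1) ≥ (c/4)(r−1) − (1/4) r² ‖H‖², with equality if and only if T_{11}^s = T_{22}^s + ⋯ + T_{rr}^s and T_{1j}^s = 0 for j = 2,...,r and all s, where T_{ij}^s = g(T_{U_i}U_j, X_s) for a horizontal orthonormal frame {X_1,...,X_ℓ}. -/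
open scoped RealInnerProductSpace

lemma repr_span {V : Type*} [NormedAddCommGroup V] [InnerProductSpace ℝ V]
    {ℓ : ℕ} {Xf : Fin ℓ → V} (hXon : Orthonormal ℝ Xf) {v : V}
    (hv : v ∈ Submodule.span ℝ (Set.range Xf)) :
    v = ∑ s, ⟪v, Xf s⟫ • Xf s := by
  induction hv using Submodule.span_induction with
  | mem x hx =>
    obtain ⟨t, rfl⟩ := hx
    rw [Finset.sum_eq_single t]
    · rw [orthonormal_iff_ite.mp hXon]; simp
    · intro s _ hs
      rw [orthonormal_iff_ite.mp hXon]; simp [hs.symm]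
    · simp
  | zero => simp
  | add x y _ _ hx hy =>
    conv_lhs => rw [hx, hy]
    rw [← Finset.sum_add_distrib]
    refine Finset.sum_congr rfl fun s _ => ?_
    rw [inner_add_left, add_smul]
  | smul a x _ hx =>
    conv_lhs => rw [hx]
    rw [Finset.smul_sum]
    refine Finset.sum_congr rfl fun s _ => ?_
    rw [real_inner_smul_left, smul_smul]

lemma inner_span_sum {V : Type*} [NormedAddCommGroup V] [InnerProductSpace ℝ V]
    {ℓ : ℕ} {Xf : Fin ℓ → V} (hXon : Orthonormal ℝ Xf) {v : V}
    (hv : v ∈ Submodule.span ℝ (Set.range Xf)) (w : V) :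
    ⟪v, w⟫ = ∑ s, ⟪v, Xf s⟫ * ⟪w, Xf s⟫ := by
  conv_lhs => rw [repr_span hXon hv]
  rw [sum_inner]
  refine Finset.sum_congr rfl fun s _ => ?_
  rw [real_inner_smul_left, real_inner_comm w (Xf s)]

/-- Chen–Ricci inequality for the fibers (Theorem 3.5).  `Uf` and `Xf` are
orthonormal frames of the vertical and horizontal distributions of an
anti-invariant Riemannian submersion from a quaternionic space form `M(c)`;
the O'Neill tensor `T` takes vertical pairs to horizontal vectors, with
components `T_{ij}^s = g(T_{U_i}U_j, X_s)`; `H = (1/r)∑_j T_{U_j}U_j` is the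
mean curvature vector and `Riĉ(U_1)` the fiber Ricci curvature in the direction
`U_1` (index `⟨0, hr⟩`), via the Gauss equation.  Then
`Riĉ(U_1) ≥ (c/4)(r−1) − (1/4)r²‖H‖²`, with equality iff
`T_{11}^s = T_{22}^s + ⋯ + T_{rr}^s` and `T_{1j}^s = 0` for `j = 2,…,r`. -/
theorem stmt_8 {V : Type*} [NormedAddCommGroup V] [InnerProductSpace ℝ V]
    (c : ℝ) (r ℓ : ℕ) (hr : 0 < r) (J : Fin 3 → V → V) (Rm : V → V → V → V → ℝ)
    (hRm : ∀ X Y Z W, Rm X Y Z W =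
      (c / 4) * (⟪Y, Z⟫ * ⟪X, W⟫ - ⟪X, Z⟫ * ⟪Y, W⟫
        + ∑ α : Fin 3, (⟪J α Y, Z⟫ * ⟪J α X, W⟫ - ⟪J α X, Z⟫ * ⟪J α Y, W⟫
            + 2 * ⟪J α Y, X⟫ * ⟪J α Z, W⟫)))
    (Uf : Fin r → V) (Xf : Fin ℓ → V)
    (hUon : Orthonormal ℝ Uf) (hXon : Orthonormal ℝ Xf)
    (hperp : ∀ (k : Fin r) (s : Fin ℓ), ⟪Uf k, Xf s⟫ = 0)
    (hanti : ∀ (α : Fin 3) (i j : Fin r), ⟪J α (Uf i), Uf j⟫ = 0)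
    (T : V → V → V)
    (hTsym : ∀ i j : Fin r, T (Uf i) (Uf j) = T (Uf j) (Uf i))
    (hThoriz : ∀ i j : Fin r, T (Uf i) (Uf j) ∈ Submodule.span ℝ (Set.range Xf))
    (Ts : Fin r → Fin r → Fin ℓ → ℝ)
    (hTs : ∀ i j s, Ts i j s = ⟪T (Uf i) (Uf j), Xf s⟫)
    (RicHat : ℝ)
    (hRic : RicHat = ∑ i, (Rm (Uf ⟨0, hr⟩) (Uf i) (Uf i) (Uf ⟨0, hr⟩)
      - ⟪T (Uf ⟨0, hr⟩) (Uf ⟨0, hr⟩), T (Uf i) (Uf i)⟫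
      + ⟪T (Uf i) (Uf ⟨0, hr⟩), T (Uf ⟨0, hr⟩) (Uf i)⟫))
    (H : V) (hH : H = (1 / (r : ℝ)) • ∑ j, T (Uf j) (Uf j)) :
    RicHat ≥ (c / 4) * ((r : ℝ) - 1) - (1 / 4) * (r : ℝ) ^ 2 * ‖H‖ ^ 2 ∧
    (RicHat = (c / 4) * ((r : ℝ) - 1) - (1 / 4) * (r : ℝ) ^ 2 * ‖H‖ ^ 2 ↔
      (∀ s : Fin ℓ, Ts ⟨0, hr⟩ ⟨0, hr⟩ s =
          ∑ j ∈ Finset.univ.filter (fun j => j ≠ (⟨0, hr⟩ : Fin r)), Ts j j s) ∧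
      (∀ (s : Fin ℓ) (j : Fin r), j ≠ ⟨0, hr⟩ → Ts ⟨0, hr⟩ j s = 0)) := by
  set z : Fin r := ⟨0, hr⟩ with hz
  have hUij : ∀ i j : Fin r, ⟪Uf i, Uf j⟫ = if i = j then 1 else 0 :=
    fun i j => orthonormal_iff_ite.mp hUon i j
  set A : Fin ℓ → ℝ := fun s => Ts z z s with hA
  set B : Fin ℓ → ℝ := fun s =>
    ∑ j ∈ Finset.univ.filter (fun j => j ≠ z), Ts j j s with hB
  have hrne : (r : ℝ) ≠ 0 := Nat.cast_ne_zero.mpr hr.ne'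
  -- curvature term
  have hRmterm : ∀ i, Rm (Uf z) (Uf i) (Uf i) (Uf z)
      = (c / 4) * (1 - if i = z then 1 else 0) := by
    intro i
    rw [hRm]
    simp only [hanti, hUij]
    by_cases h : i = z <;> simp [h, eq_comm]
  -- inner products in components
  have hinner : ∀ i j k m : Fin r,
      ⟪T (Uf i) (Uf j), T (Uf k) (Uf m)⟫ = ∑ s, Ts i j s * Ts k m s := by
    intro i j k m
    rw [inner_span_sum hXon (hThoriz i j)]
    exact Finset.sum_congr rfl fun s _ => by rw [hTs, hTs]
  -- sum over diagonal
  have hsumdiag : ∀ s, (∑ j, Ts j j s) = A s + B s := by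
    intro s
    rw [hA, hB]
    rw [← Finset.sum_filter_add_sum_filter_not Finset.univ (fun j => j = z)]
    congr 1
    rw [Finset.filter_eq' Finset.univ z]
    simp
  -- norm of H
  have hHnorm : (1 / 4) * (r : ℝ) ^ 2 * ‖H‖ ^ 2
      = ∑ s, (1 / 4) * (A s + B s) ^ 2 := by
    have hSspan : (∑ j, T (Uf j) (Uf j)) ∈ Submodule.span ℝ (Set.range Xf) :=
      Submodule.sum_mem _ fun j _ => hThoriz j j
    have h1 : ‖(∑ j, T (Uf j) (Uf j))‖ ^ 2 = ∑ s, (A s + B s) ^ 2 := by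
      rw [← real_inner_self_eq_norm_sq, inner_span_sum hXon hSspan]
      refine Finset.sum_congr rfl fun s _ => ?_
      have : ⟪∑ j, T (Uf j) (Uf j), Xf s⟫ = ∑ j, Ts j j s := by
        rw [sum_inner]
        exact Finset.sum_congr rfl fun j _ => (hTs j j s).symm
      rw [this, hsumdiag, sq]
    have h2 : ‖H‖ ^ 2 = (1 / (r : ℝ)) ^ 2 * ‖(∑ j, T (Uf j) (Uf j))‖ ^ 2 := by
      rw [hH, norm_smul]
      simp [mul_pow, abs_of_nonneg]
    have hscal : ∀ S : ℝ, (1 / 4) * (r : ℝ) ^ 2 * ((1 / (r : ℝ)) ^ 2 * S)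
        = (1 / 4) * S := fun S => by
      field_simp
    rw [h2, h1, hscal, Finset.mul_sum]
  -- RicHat expansion
  have hRicEq : RicHat = (c / 4) * ((r : ℝ) - 1)
      + (∑ s, ((A s) ^ 2 - A s * (A s + B s)))
      + ∑ j ∈ Finset.univ.filter (fun j => j ≠ z), ∑ s, (Ts z j s) ^ 2 := by
    rw [hRic]
    have step : ∀ i : Fin r,
        (Rm (Uf z) (Uf i) (Uf i) (Uf z)
          - ⟪T (Uf z) (Uf z), T (Uf i) (Uf i)⟫
          + ⟪T (Uf i) (Uf z), T (Uf z) (Uf i)⟫)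
        = (c / 4) * (1 - if i = z then 1 else 0)
          - (∑ s, A s * Ts i i s) + ∑ s, (Ts z i s) ^ 2 := by
      intro i
      rw [hRmterm, hinner, hTsym i z, hinner]
      congr 1
      exact Finset.sum_congr rfl fun s _ => (sq (Ts z i s)).symm
    rw [Finset.sum_congr rfl fun i _ => step i]
    rw [Finset.sum_add_distrib, Finset.sum_sub_distrib]
    have e1 : (∑ i : Fin r, (c / 4) * (1 - if i = z then 1 else 0))
        = (c / 4) * ((r : ℝ) - 1) := by
      rw [← Finset.mul_sum, Finset.sum_sub_distrib]
      simp
    have e2 : (∑ i : Fin r, ∑ s, A s * Ts i i s)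
        = ∑ s, A s * (A s + B s) := by
      rw [Finset.sum_comm]
      exact Finset.sum_congr rfl fun s _ => by rw [← Finset.mul_sum, hsumdiag]
    have e3 : (∑ i : Fin r, ∑ s, (Ts z i s) ^ 2)
        = (∑ s, (A s) ^ 2) + ∑ j ∈ Finset.univ.filter (fun j => j ≠ z),
            ∑ s, (Ts z j s) ^ 2 := by
      rw [← Finset.sum_filter_add_sum_filter_not Finset.univ (fun j => j = z)]
      congr 1
      rw [Finset.filter_eq' Finset.univ z]
      simp [hA]
    have e4 : (∑ s, ((A s) ^ 2 - A s * (A s + B s)))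
        = (∑ s, (A s) ^ 2) - ∑ s, A s * (A s + B s) := Finset.sum_sub_distrib _ _
    rw [e1, e2, e3, e4]
    ring
  -- key identity
  set E : ℝ := (∑ s, (1 / 4) * (B s - A s) ^ 2)
      + ∑ j ∈ Finset.univ.filter (fun j => j ≠ z), ∑ s, (Ts z j s) ^ 2 with hE
  have hkey : RicHat = (c / 4) * ((r : ℝ) - 1)
      - (1 / 4) * (r : ℝ) ^ 2 * ‖H‖ ^ 2 + E := by
    rw [hRicEq, hHnorm, hE]
    have e5 : (∑ s, ((A s) ^ 2 - A s * (A s + B s)))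
        = (∑ s, (1 / 4) * (B s - A s) ^ 2) - ∑ s, (1 / 4) * (A s + B s) ^ 2 := by
      rw [← Finset.sum_sub_distrib]
      exact Finset.sum_congr rfl fun s _ => by ring
    rw [e5]
    ring
  have hE1nonneg : (0:ℝ) ≤ ∑ s, (1 / 4) * (B s - A s) ^ 2 :=
    Finset.sum_nonneg fun s _ => by positivity
  have hE2nonneg : (0:ℝ) ≤ ∑ j ∈ Finset.univ.filter (fun j => j ≠ z),
      ∑ s, (Ts z j s) ^ 2 :=
    Finset.sum_nonneg fun j _ => Finset.sum_nonneg fun s _ => sq_nonneg _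
  have hEnonneg : 0 ≤ E := by rw [hE]; linarith
  constructor
  · rw [hkey]; linarith
  · rw [hkey]
    constructor
    · intro heq
      have hE0 : E = 0 := by linear_combination heq
      rw [hE] at hE0
      have h1 : (∑ s, (1 / 4) * (B s - A s) ^ 2) = 0 := by linarith
      have h2 : (∑ j ∈ Finset.univ.filter (fun j => j ≠ z),
          ∑ s, (Ts z j s) ^ 2) = 0 := by linarith
      constructor
      · intro s
        have := (Finset.sum_eq_zero_iff_of_nonneg
          (fun s _ => by positivity)).mp h1 s (Finset.mem_univ s)
        have hba : (B s - A s) ^ 2 = 0 := by linarith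
        have := sq_eq_zero_iff.mp hba
        show A s = B s
        linarith
      · intro s j hj
        have hjmem : j ∈ Finset.univ.filter (fun j => j ≠ z) := by
          simp [hj]
        have := (Finset.sum_eq_zero_iff_of_nonneg
          (fun j _ => Finset.sum_nonneg fun s _ => sq_nonneg _)).mp h2 j hjmem
        have := (Finset.sum_eq_zero_iff_of_nonneg
          (fun s _ => sq_nonneg _)).mp this s (Finset.mem_univ s)
        exact sq_eq_zero_iff.mp this
    · rintro ⟨ha, hb⟩
      have hE0 : E = 0 := by
        rw [hE]
        have e1 : (∑ s, (1 / 4) * (B s - A s) ^ 2) = 0 :=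
          Finset.sum_eq_zero fun s _ => by
            have : A s = B s := ha s
            rw [← this]; ring
        have e2 : (∑ j ∈ Finset.univ.filter (fun j => j ≠ z),
            ∑ s, (Ts z j s) ^ 2) = 0 :=
          Finset.sum_eq_zero fun j hj => Finset.sum_eq_zero fun s _ => by
            rw [hb s j (Finset.mem_filter.mp hj).2]; ring
        rw [e1, e2]; ring
      rw [hE0]; ring
end

section
/- Let π : M(c) → N be an anti-invariant Riemannian submersion from a quaternionic space form with vertical dimension r and horizontal dimension ℓ. Then the sum of the vertical and horizontal scalar curvatures satisfies the identity (c/4)[ (ℓ+r)(ℓ+r−1) + Σ_{α=1}^3( 6 Σ_{i=1}^ℓ ‖B_{J_α}X_i‖² + 3 Σ_{i=1}^ℓ ‖C_{J_α}X_i‖² ) ] = τ̂ + τ* + r²‖H‖² − ‖T^H‖² + 3‖A^V‖² − 2δ(N) + 2‖T^V‖² − 2‖A^H‖², where ‖T^V‖² = Σ_{i,k} g(T_{U_k}X_i, T_{U_k}X_i), ‖T^H‖² = Σ_{j,k} g(T_{U_j}U_k, T_{U_j}U_k), ‖A^V‖² = Σ_{i,j} g(A_{X_i}X_j, A_{X_i}X_j),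 ‖A^H‖² = Σ_{i,k} g(A_{X_i}U_k, A_{X_i}U_k), and δ(N) is the horizontal divergence of N = Σ_j T_{U_j}U_j. -/
open scoped RealInnerProductSpace

/-- The scalar curvature identity (3.47) for an anti-invariant Riemannian
submersion from a quaternionic space form `M(c)` with vertical dimension `r` and
horizontal dimension `ℓ`.  `Uf`, `Xf` are orthonormal frames of the vertical
and horizontal distributions; `J α (Xf i) = B α i + C α i` is the
vertical/horizontal decomposition; `T`, `A` are the O'Neill tensors (`T`
symmetric on the vertical frame, `A` alternating on the horizontal frame);
`dT i k = g((∇_{X_i}T)(U_k,U_k), X_i)` encodes the mixed Gauss–Codazzi equation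
`R(X_i,U_k,U_k,X_i) = −dT i k + ‖T_{U_k}X_i‖² − ‖A_{X_i}U_k‖²`, with horizontal
divergence `δ(N) = ∑_{i,k} dT i k`; `τ̂` and `τ*` are the scalar curvatures of
the two distributions via the Gauss–Codazzi equations; `H` is the mean curvature
vector of the fibers.  Then
`(c/4)[(ℓ+r)(ℓ+r−1) + ∑_α(6∑_i‖B_{J_α}X_i‖² + 3∑_i‖C_{J_α}X_i‖²)]
  = τ̂ + τ* + r²‖H‖² − ‖T^H‖² + 3‖A^V‖² − 2δ(N) + 2‖T^V‖² − 2‖A^H‖²`. -/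
theorem stmt_13 {V : Type*} [NormedAddCommGroup V] [InnerProductSpace ℝ V]
    (c : ℝ) (r ℓ : ℕ) (hr : 0 < r) (hl : 0 < ℓ)
    (J : Fin 3 → V → V) (Rm : V → V → V → V → ℝ)
    (hRm : ∀ X Y Z W, Rm X Y Z W =
      (c / 4) * (⟪Y, Z⟫ * ⟪X, W⟫ - ⟪X, Z⟫ * ⟪Y, W⟫
        + ∑ α : Fin 3, (⟪J α Y, Z⟫ * ⟪J α X, W⟫ - ⟪J α X, Z⟫ * ⟪J α Y, W⟫
            + 2 * ⟪J α Y, X⟫ * ⟪J α Z, W⟫)))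
    (hJskew : ∀ (α : Fin 3) (x y : V), ⟪J α x, y⟫ = -⟪x, J α y⟫)
    (Uf : Fin r → V) (Xf : Fin ℓ → V)
    (hUon : Orthonormal ℝ Uf) (hXon : Orthonormal ℝ Xf)
    (hperp : ∀ (k : Fin r) (i : Fin ℓ), ⟪Uf k, Xf i⟫ = 0)
    (hanti : ∀ (α : Fin 3) (j k : Fin r), ⟪J α (Uf j), Uf k⟫ = 0)
    (B C : Fin 3 → Fin ℓ → V)
    (hBC : ∀ (α : Fin 3) (i : Fin ℓ), J α (Xf i) = B α i + C α i)
    (hBvert : ∀ (α : Fin 3) (i j : Fin ℓ), ⟪B α i, Xf j⟫ = 0)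
    (hChoriz : ∀ (α : Fin 3) (i : Fin ℓ) (k : Fin r), ⟪C α i, Uf k⟫ = 0)
    (T A : V → V → V)
    (hTsym : ∀ j k : Fin r, T (Uf j) (Uf k) = T (Uf k) (Uf j))
    (hAalt : ∀ i s : Fin ℓ, A (Xf i) (Xf s) = -A (Xf s) (Xf i))
    (dT : Fin ℓ → Fin r → ℝ)
    (hmixed : ∀ (i : Fin ℓ) (k : Fin r),
      Rm (Xf i) (Uf k) (Uf k) (Xf i) =
        -dT i k + ‖T (Uf k) (Xf i)‖ ^ 2 - ‖A (Xf i) (Uf k)‖ ^ 2)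
    (tauHat tauStar deltaN : ℝ) (H : V)
    (htauHat : tauHat = ∑ j, ∑ k, (Rm (Uf j) (Uf k) (Uf k) (Uf j)
      - ⟪T (Uf j) (Uf j), T (Uf k) (Uf k)⟫ + ⟪T (Uf k) (Uf j), T (Uf j) (Uf k)⟫))
    (htauStar : tauStar = ∑ i, ∑ s, (Rm (Xf i) (Xf s) (Xf s) (Xf i)
      + 2 * ⟪A (Xf i) (Xf s), A (Xf s) (Xf i)⟫
      - ⟪A (Xf s) (Xf s), A (Xf i) (Xf i)⟫
      + ⟪A (Xf i) (Xf s), A (Xf s) (Xf i)⟫))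
    (hdelta : deltaN = ∑ i, ∑ k, dT i k)
    (hH : H = (1 / (r : ℝ)) • ∑ j, T (Uf j) (Uf j)) :
    (c / 4) * (((ℓ : ℝ) + r) * ((ℓ : ℝ) + r - 1)
        + ∑ α : Fin 3, (6 * ∑ i, ∑ k, ⟪B α i, Uf k⟫ ^ 2
            + 3 * ∑ i, ∑ j, ⟪C α i, Xf j⟫ ^ 2)) =
      tauHat + tauStar + (r : ℝ) ^ 2 * ‖H‖ ^ 2
        - ∑ j, ∑ k, ⟪T (Uf j) (Uf k), T (Uf j) (Uf k)⟫
        + 3 * ∑ i, ∑ j, ⟪A (Xf i) (Xf j), A (Xf i) (Xf j)⟫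
        - 2 * deltaN
        + 2 * ∑ i, ∑ k, ⟪T (Uf k) (Xf i), T (Uf k) (Xf i)⟫
        - 2 * ∑ i, ∑ k, ⟪A (Xf i) (Uf k), A (Xf i) (Uf k)⟫ := by
  -- generic double-sum helpers
  have hsub : ∀ {n m : ℕ} (f g : Fin n → Fin m → ℝ),
      ∑ a, ∑ b, (f a b - g a b) = (∑ a, ∑ b, f a b) - (∑ a, ∑ b, g a b) := by
    intro n m f g; simp [Finset.sum_sub_distrib]
  have hadd : ∀ {n m : ℕ} (f g : Fin n → Fin m → ℝ),
      ∑ a, ∑ b, (f a b + g a b) = (∑ a, ∑ b, f a b) + (∑ a, ∑ b, g a b) := by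
    intro n m f g; simp [Finset.sum_add_distrib]
  have hcomm : ∀ {n m : ℕ} (f : Fin n → Fin m → Fin 3 → ℝ),
      ∑ a, ∑ b, ∑ γ, f a b γ = ∑ γ, ∑ a, ∑ b, f a b γ := by
    intro n m f
    calc ∑ a, ∑ b, ∑ γ, f a b γ
        = ∑ a, ∑ γ, ∑ b, f a b γ := Finset.sum_congr rfl fun a _ => Finset.sum_comm
      _ = ∑ γ, ∑ a, ∑ b, f a b γ := Finset.sum_comm
  -- basic inner product facts
  have hUU : ∀ j k : Fin r, ⟪Uf j, Uf k⟫ = if j = k then (1:ℝ) else 0 :=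
    orthonormal_iff_ite.mp hUon
  have hXX : ∀ i s : Fin ℓ, ⟪Xf i, Xf s⟫ = if i = s then (1:ℝ) else 0 :=
    orthonormal_iff_ite.mp hXon
  have hJself : ∀ (α : Fin 3) (x : V), ⟪J α x, x⟫ = 0 := by
    intro α x
    have h1 := hJskew α x x
    have h2 : ⟪x, J α x⟫ = ⟪J α x, x⟫ := real_inner_comm _ _
    linarith
  have hC0 : ∀ (α : Fin 3) (t : Fin ℓ), ⟪C α t, Xf t⟫ = 0 := by
    intro α t
    have h := hJself α (Xf t)
    rw [hBC, inner_add_left, hBvert, zero_add] at h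
    exact h
  have hJXU : ∀ (α : Fin 3) (i : Fin ℓ) (k : Fin r),
      ⟪J α (Xf i), Uf k⟫ = ⟪B α i, Uf k⟫ := by
    intro α i k; rw [hBC, inner_add_left, hChoriz, add_zero]
  have hJXX : ∀ (α : Fin 3) (i s : Fin ℓ),
      ⟪J α (Xf i), Xf s⟫ = ⟪C α i, Xf s⟫ := by
    intro α i s; rw [hBC, inner_add_left, hBvert, zero_add]
  have hJUX : ∀ (α : Fin 3) (k : Fin r) (i : Fin ℓ),
      ⟪J α (Uf k), Xf i⟫ = -⟪B α i, Uf k⟫ := by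
    intro α k i
    rw [hJskew, real_inner_comm, hJXU]
  have hXU : ∀ (i : Fin ℓ) (k : Fin r), ⟪Xf i, Uf k⟫ = 0 := by
    intro i k; rw [real_inner_comm, hperp]
  -- pointwise curvature values
  have h1 : ∀ j k : Fin r, Rm (Uf j) (Uf k) (Uf k) (Uf j)
      = (c/4) * (1 - (if j = k then (1:ℝ) else 0)) := by
    intro j k
    rw [hRm]
    simp only [Fin.sum_univ_three, hUU, hanti]
    rcases eq_or_ne j k with h | h
    · subst h; simp
    · simp only [if_neg h, if_neg (Ne.symm h), eq_self_iff_true, if_true]; ring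
  have h2 : ∀ i s : Fin ℓ, Rm (Xf i) (Xf s) (Xf s) (Xf i)
      = (c/4) * (1 - (if i = s then (1:ℝ) else 0) + ∑ α : Fin 3, 3 * ⟪C α i, Xf s⟫^2) := by
    intro i s
    rw [hRm]
    have hJXXs : ∀ α : Fin 3, ⟪J α (Xf s), Xf i⟫ = -⟪C α i, Xf s⟫ := by
      intro α; rw [hJskew, real_inner_comm, hJXX]
    rcases eq_or_ne i s with h | h
    · subst h; simp [hJself, hXX, hC0]
    · have e : ∀ α : Fin 3, ⟪C α s, Xf i⟫ = -⟪C α i, Xf s⟫ := by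
        intro α; rw [← hJXX, hJskew, real_inner_comm, hJXX]
      simp only [hJself]
      simp only [Fin.sum_univ_three, hJXX, hXX]
      simp only [e]
      simp only [if_neg h, if_neg (Ne.symm h), eq_self_iff_true, if_true]
      ring
  have h3 : ∀ (i : Fin ℓ) (k : Fin r), Rm (Xf i) (Uf k) (Uf k) (Xf i)
      = (c/4) * (1 + ∑ α : Fin 3, 3 * ⟪B α i, Uf k⟫^2) := by
    intro i k
    rw [hRm]
    simp only [Fin.sum_univ_three, hJXU, hJUX, hJself, hUU, hXX, hXU, hperp, hanti,
      eq_self_iff_true, if_true]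
    ring
  -- abbreviations
  set SUU := ∑ j, ∑ k, Rm (Uf j) (Uf k) (Uf k) (Uf j) with hSUU
  set SXX := ∑ i, ∑ s, Rm (Xf i) (Xf s) (Xf s) (Xf i) with hSXX
  set Smix := ∑ i, ∑ k, Rm (Xf i) (Uf k) (Uf k) (Xf i) with hSmix
  set bsum := ∑ α : Fin 3, ∑ i, ∑ k, ⟪B α i, Uf k⟫^2 with hbsum
  set csum := ∑ α : Fin 3, ∑ i, ∑ s, ⟪C α i, Xf s⟫^2 with hcsum
  set NS := ∑ j, ∑ k, ⟪T (Uf j) (Uf j), T (Uf k) (Uf k)⟫ with hNS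
  set TH := ∑ j, ∑ k, ⟪T (Uf j) (Uf k), T (Uf j) (Uf k)⟫ with hTH
  set AV := ∑ i, ∑ s, ⟪A (Xf i) (Xf s), A (Xf i) (Xf s)⟫ with hAV
  set TV := ∑ i, ∑ k, ⟪T (Uf k) (Xf i), T (Uf k) (Xf i)⟫ with hTV
  set AH := ∑ i, ∑ k, ⟪A (Xf i) (Uf k), A (Xf i) (Uf k)⟫ with hAH
  -- curvature sum values
  have hS1 : SUU = (c/4) * ((r:ℝ)^2 - r) := by
    rw [hSUU]
    simp_rw [h1, ← Finset.mul_sum]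
    congr 1
    rw [hsub]
    simp [Finset.sum_ite_eq]
    push_cast
    ring
  have hS2 : SXX = (c/4) * ((ℓ:ℝ)^2 - ℓ + 3 * csum) := by
    rw [hSXX]
    simp_rw [h2, ← Finset.mul_sum]
    congr 1
    rw [hadd, hsub]
    simp_rw [← Finset.mul_sum]
    rw [hcomm fun a b γ => ⟪C γ a, Xf b⟫^2, ← hcsum]
    simp [Finset.sum_ite_eq]
    push_cast
    ring
  have hS3 : Smix = (c/4) * ((ℓ:ℝ) * r + 3 * bsum) := by
    rw [hSmix]
    simp_rw [h3, ← Finset.mul_sum]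
    congr 1
    rw [hadd]
    simp_rw [← Finset.mul_sum]
    rw [hcomm fun a b γ => ⟪B γ a, Uf b⟫^2, ← hbsum]
    simp
  -- LHS equals total curvature
  have hLHS : (c / 4) * (((ℓ : ℝ) + r) * ((ℓ : ℝ) + r - 1)
        + ∑ α : Fin 3, (6 * ∑ i, ∑ k, ⟪B α i, Uf k⟫ ^ 2
            + 3 * ∑ i, ∑ j, ⟪C α i, Xf j⟫ ^ 2)) = SUU + SXX + 2 * Smix := by
    rw [hS1, hS2, hS3, hbsum, hcsum]
    rw [Finset.sum_add_distrib, ← Finset.mul_sum, ← Finset.mul_sum]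
    ring
  -- RHS pieces
  have hAzero : ∀ i : Fin ℓ, A (Xf i) (Xf i) = 0 := by
    intro i
    have h := hAalt i i
    have h2 : A (Xf i) (Xf i) + A (Xf i) (Xf i) = 0 := by
      nth_rewrite 1 [h]; abel
    have h3 : (2:ℝ) • A (Xf i) (Xf i) = 0 := by rw [two_smul]; exact h2
    rcases smul_eq_zero.mp h3 with h4 | h4
    · norm_num at h4
    · exact h4
  have hE1 : tauHat = SUU - NS + TH := by
    rw [htauHat]
    have point : ∀ j k : Fin r,
        Rm (Uf j) (Uf k) (Uf k) (Uf j) - ⟪T (Uf j) (Uf j), T (Uf k) (Uf k)⟫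
          + ⟪T (Uf k) (Uf j), T (Uf j) (Uf k)⟫
        = Rm (Uf j) (Uf k) (Uf k) (Uf j) - ⟪T (Uf j) (Uf j), T (Uf k) (Uf k)⟫
          + ⟪T (Uf j) (Uf k), T (Uf j) (Uf k)⟫ := by
      intro j k; rw [hTsym k j]
    simp_rw [point]
    rw [hadd, hsub, ← hSUU, ← hNS, ← hTH]
  have hE2 : tauStar = SXX - 3 * AV := by
    rw [htauStar]
    have point : ∀ i s : Fin ℓ,
        Rm (Xf i) (Xf s) (Xf s) (Xf i) + 2 * ⟪A (Xf i) (Xf s), A (Xf s) (Xf i)⟫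
          - ⟪A (Xf s) (Xf s), A (Xf i) (Xf i)⟫ + ⟪A (Xf i) (Xf s), A (Xf s) (Xf i)⟫
        = Rm (Xf i) (Xf s) (Xf s) (Xf i)
          - 3 * ⟪A (Xf i) (Xf s), A (Xf i) (Xf s)⟫ := by
      intro i s
      rw [hAzero, hAalt s i, inner_neg_right, inner_zero_left]
      ring
    simp_rw [point]
    rw [hsub, ← hSXX]
    congr 1
    rw [hAV]
    simp_rw [Finset.mul_sum]
  have hE3 : (r:ℝ)^2 * ‖H‖^2 = NS := by
    have hrne : (r:ℝ) ≠ 0 := Nat.cast_ne_zero.mpr hr.ne'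
    have hnorm : ‖∑ j, T (Uf j) (Uf j)‖^2 = NS := by
      rw [hNS, ← real_inner_self_eq_norm_sq, sum_inner]
      exact Finset.sum_congr rfl fun j _ => by rw [inner_sum]
    rw [hH, norm_smul, mul_pow, Real.norm_eq_abs, sq_abs, ← hnorm]
    field_simp
  have hE4 : Smix = TV - AH - deltaN := by
    rw [hSmix]
    have point : ∀ (i : Fin ℓ) (k : Fin r),
        Rm (Xf i) (Uf k) (Uf k) (Xf i)
        = ⟪T (Uf k) (Xf i), T (Uf k) (Xf i)⟫ - ⟪A (Xf i) (Uf k), A (Xf i) (Uf k)⟫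
          - dT i k := by
      intro i k
      rw [hmixed, real_inner_self_eq_norm_sq, real_inner_self_eq_norm_sq]
      ring
    simp_rw [point]
    rw [hsub, hsub, ← hTV, ← hAH, hdelta]
  rw [hLHS, hE1, hE2, hE4]
  linarith [hE3]
end
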